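/- arXiv:1608.02794 — 3 statements merged into one kernel-verified Lean document; each statement's English description precedes it below -/
import Mathlib

section
/- Let α ∈ (0,1) and let l ≥ 1 be an integer. For h ∈ ℝ^m and g : ℝ^m → ℝ define Δ_h g(x) := g(x+h) − g(x) and let Δ_h^l denote the l-fold iterate of Δ_h. Then there exists a constant C_{l,α} > 1 (depending only on l and α) such that for every bounded α-Hölder continuous function g : ℝ^m → ℝ, setting ‖g‖_{α,Δ,l} := sup_x |g(x)| + sup_{x ∈ ℝ^m, h ∈ ℝ^m, h ≠ 0} |Δ_h^l g(x)| / |h|^α, one has C_{l,α}^{−1} ‖g‖_{C^α} ≤ ‖g‖_{α,Δ,l} ≤ C_{l,α} ‖g‖_{C^α}. -/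
open Set

noncomputable section

/-- The `l`-fold iterated difference operator `Δ_h^l g`. -/
def iterDiff {E : Type*} [AddCommGroup E] (h : E) (l : ℕ) (g : E → ℝ) : E → ℝ :=
  (fun u : E → ℝ => fun x => u (x + h) - u x)^[l] g

/-- The Hölder norm `‖g‖_{C^α} = sup |g| + sup_{x ≠ y} |g x - g y| / |x - y|^α`. -/
def cAlphaNorm {E : Type*} [NormedAddCommGroup E] (α : ℝ) (g : E → ℝ) : ℝ :=
  sSup {r : ℝ | ∃ x : E, r = |g x|} +
    sSup {r : ℝ | ∃ x y : E, x ≠ y ∧ r = |g x - g y| / ‖x - y‖ ^ α}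

/-- The norm `‖g‖_{α,Δ,l} = sup |g| + sup_{x, h ≠ 0} |Δ_h^l g x| / |h|^α`. -/
def deltaNorm {E : Type*} [NormedAddCommGroup E] (α : ℝ) (l : ℕ) (g : E → ℝ) : ℝ :=
  sSup {r : ℝ | ∃ x : E, r = |g x|} +
    sSup {r : ℝ | ∃ x h : E, h ≠ 0 ∧ r = |iterDiff h l g x| / ‖h‖ ^ α}

/-!
The upper bound holds because `Δ_h^l = Δ_h^{l-1} Δ_h` and each `Δ_h` at most doubles a sup norm.

The lower bound is a Marchaud-type descent. Since `Δ_{2h} = (T_h + 1) Δ_h` with `T_h` the shift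
by `h`, and `T_h^j Δ_h^k g` differs from `Δ_h^k g` by at most `j ‖Δ_h^{k+1} g‖_∞`, one gets
`|Δ_{2h}^k g - 2^k Δ_h^k g| ≤ k 2^k ‖Δ_h^{k+1} g‖_∞`. Let `S_k` be the best constant in
`|Δ_h^k g| ≤ S_k |h|^α`, which is finite because `g` is Hölder. Then
`2^k S_k ≤ 2^α S_k + k 2^k S_{k+1}`, and as `α < 1 ≤ k` this can be solved for `S_k`.
Descending from `k = l` to `k = 1` bounds the Hölder seminorm `S_1` by a multiple of `S_l`.
-/

open Finset

section Difference

variable {E : Type*} [AddCommGroup E]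

theorem iterDiff_one (h : E) (g : E → ℝ) (x : E) : iterDiff h 1 g x = g (x + h) - g x :=
  rfl

theorem iterDiff_succ_apply (h : E) (k : ℕ) (g : E → ℝ) (x : E) :
    iterDiff h (k + 1) g x = iterDiff h k g (x + h) - iterDiff h k g x :=
  congrFun (Function.iterate_succ_apply' _ k g) x

theorem iterDiff_add (h : E) (j k : ℕ) (g : E → ℝ) :
    iterDiff h (j + k) g = iterDiff h j (iterDiff h k g) :=
  Function.iterate_add_apply _ j k g

theorem abs_iterDiff_le {h : E} {u : E → ℝ} {B : ℝ} (hu : ∀ y, |u y| ≤ B) (k : ℕ) (x : E) :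
    |iterDiff h k u x| ≤ 2 ^ k * B := by
  induction k generalizing x with
  | zero => simpa [iterDiff] using hu x
  | succ k ih =>
    rw [iterDiff_succ_apply]
    calc _ ≤ |iterDiff h k u (x + h)| + |iterDiff h k u x| := abs_sub _ _
      _ ≤ 2 ^ k * B + 2 ^ k * B := add_le_add (ih _) (ih _)
      _ = 2 ^ (k + 1) * B := by ring

theorem iterDiff_add_self (h : E) (k : ℕ) (g : E → ℝ) :
    iterDiff (h + h) k g = (fun u x => u (x + h) + u x)^[k] (iterDiff h k g) := by
  have hfactor : (fun (u : E → ℝ) x => u (x + (h + h)) - u x) =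
      (fun u x => u (x + h) + u x) ∘ (fun u x => u (x + h) - u x) := by
    funext u x
    simp only [Function.comp_apply, ← add_assoc]
    ring
  have hcomm : Function.Commute (fun (u : E → ℝ) x => u (x + h) + u x)
      (fun u x => u (x + h) - u x) := fun u => by
    funext x
    ring
  unfold iterDiff
  rw [hfactor, hcomm.comp_iterate]
  rfl

theorem abs_iterate_shift_add_sub_le {h : E} {w : E → ℝ} {B : ℝ}
    (hw : ∀ y, |w (y + h) - w y| ≤ B) (k : ℕ) (x : E) :
    |(fun u x => u (x + h) + u x)^[k] w x - 2 ^ k * w x| ≤ k * 2 ^ k * B := by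
  have hB : 0 ≤ B := (abs_nonneg _).trans (hw 0)
  induction k generalizing x with
  | zero => simp
  | succ k ih =>
    set v := (fun u x => u (x + h) + u x)^[k] w
    rw [Function.iterate_succ_apply']
    calc |v (x + h) + v x - 2 ^ (k + 1) * w x|
        = |(v (x + h) - 2 ^ k * w (x + h)) + (v x - 2 ^ k * w x)
            + 2 ^ k * (w (x + h) - w x)| := by ring_nf
      _ ≤ k * 2 ^ k * B + k * 2 ^ k * B + 2 ^ k * B := by
        refine (abs_add_three _ _ _).trans (add_le_add (add_le_add (ih _) (ih _)) ?_)
        rw [abs_mul, abs_of_pos (by positivity)]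
        exact mul_le_mul_of_nonneg_left (hw x) (by positivity)
      _ ≤ (k + 1 : ℕ) * 2 ^ (k + 1) * B := by
        push_cast
        rw [pow_succ]
        nlinarith [mul_nonneg (pow_nonneg zero_le_two k) hB]

theorem abs_iterDiff_add_self_sub_le {h : E} {g : E → ℝ} {k : ℕ} {B : ℝ}
    (hB : ∀ y, |iterDiff h (k + 1) g y| ≤ B) (x : E) :
    |iterDiff (h + h) k g x - 2 ^ k * iterDiff h k g x| ≤ k * 2 ^ k * B := by
  rw [iterDiff_add_self]
  exact abs_iterate_shift_add_sub_le (fun y => by rw [← iterDiff_succ_apply]; exact hB y) k x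

end Difference

def supNorm {E : Type*} (g : E → ℝ) : ℝ :=
  sSup {r : ℝ | ∃ x : E, r = |g x|}

theorem supNorm_nonneg {E : Type*} (g : E → ℝ) : 0 ≤ supNorm g :=
  Real.sSup_nonneg (by rintro _ ⟨x, rfl⟩; exact abs_nonneg _)

section Holder

variable {E : Type*} [NormedAddCommGroup E] {α : ℝ} {k : ℕ} {g : E → ℝ}

def HasIterDiffBound (α : ℝ) (k : ℕ) (g : E → ℝ) (B : ℝ) : Prop :=
  ∀ x h : E, h ≠ 0 → |iterDiff h k g x| ≤ B * ‖h‖ ^ α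

-- `sSup` of an unbounded set is `0`, so this is meaningful only under some `HasIterDiffBound`.
def iterDiffSeminorm (α : ℝ) (k : ℕ) (g : E → ℝ) : ℝ :=
  sSup {r : ℝ | ∃ x h : E, h ≠ 0 ∧ r = |iterDiff h k g x| / ‖h‖ ^ α}

theorem iterDiffSeminorm_nonneg (α : ℝ) (k : ℕ) (g : E → ℝ) : 0 ≤ iterDiffSeminorm α k g :=
  Real.sSup_nonneg (by rintro _ ⟨x, h, -, rfl⟩; positivity)

theorem deltaNorm_eq (α : ℝ) (l : ℕ) (g : E → ℝ) :
    deltaNorm α l g = supNorm g + iterDiffSeminorm α l g :=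
  rfl

theorem cAlphaNorm_eq (α : ℝ) (g : E → ℝ) :
    cAlphaNorm α g = supNorm g + iterDiffSeminorm α 1 g := by
  unfold cAlphaNorm supNorm iterDiffSeminorm
  congr 2
  ext r
  constructor
  · rintro ⟨x, y, hxy, rfl⟩
    exact ⟨y, x - y, sub_ne_zero.2 hxy, by rw [iterDiff_one, add_sub_cancel]⟩
  · rintro ⟨x, h, hh, rfl⟩
    exact ⟨x + h, x, by simpa using hh, by rw [iterDiff_one, add_sub_cancel_left]⟩

namespace HasIterDiffBound

variable {B : ℝ}

theorem iterDiffSeminorm_le (hB : HasIterDiffBound α k g B) (hB₀ : 0 ≤ B) :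
    iterDiffSeminorm α k g ≤ B :=
  Real.sSup_le (by
    rintro _ ⟨x, h, hh, rfl⟩
    exact (div_le_iff₀ (Real.rpow_pos_of_pos (norm_pos_iff.2 hh) α)).2 (hB x h hh)) hB₀

theorem iterDiffSeminorm_bound (hB : HasIterDiffBound α k g B) :
    HasIterDiffBound α k g (iterDiffSeminorm α k g) := by
  intro x h hh
  rw [← div_le_iff₀ (Real.rpow_pos_of_pos (norm_pos_iff.2 hh) α)]
  refine le_csSup ⟨B, ?_⟩ ⟨x, h, hh, rfl⟩
  rintro _ ⟨y, h', hh', rfl⟩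
  exact (div_le_iff₀ (Real.rpow_pos_of_pos (norm_pos_iff.2 hh') α)).2 (hB y h' hh')

theorem add (hB : HasIterDiffBound α k g B) (j : ℕ) :
    HasIterDiffBound α (j + k) g (2 ^ j * B) := by
  intro x h hh
  rw [iterDiff_add, mul_assoc]
  exact abs_iterDiff_le (fun y => hB y h hh) j x

end HasIterDiffBound

end Holder

section Marchaud

variable {E : Type*} [NormedAddCommGroup E] [NormedSpace ℝ E] {α : ℝ} {g : E → ℝ}

def marchaudConst (α : ℝ) (k : ℕ) : ℝ :=
  k * 2 ^ k / (2 ^ k - 2 ^ α)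

theorem two_rpow_lt_two_pow {k : ℕ} (h : α < k) : (2 : ℝ) ^ α < 2 ^ k := by
  simpa using Real.rpow_lt_rpow_of_exponent_lt one_lt_two h

theorem marchaudConst_nonneg {k : ℕ} (h : α < k) : 0 ≤ marchaudConst α k :=
  div_nonneg (by positivity) (sub_nonneg.2 (two_rpow_lt_two_pow h).le)

theorem HasIterDiffBound.of_succ {k : ℕ} {A B : ℝ} (hαk : α < k) (hA : HasIterDiffBound α k g A)
    (hB : HasIterDiffBound α (k + 1) g B) : HasIterDiffBound α k g (marchaudConst α k * B) := by
  intro x h hh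
  have hpos : 0 < ‖h‖ ^ α := Real.rpow_pos_of_pos (norm_pos_iff.2 hh) α
  have hB₀ : 0 ≤ B := nonneg_of_mul_nonneg_left ((abs_nonneg _).trans (hB x h hh)) hpos
  set S := iterDiffSeminorm α k g
  have hS : HasIterDiffBound α k g S := hA.iterDiffSeminorm_bound
  have hdouble : HasIterDiffBound α k g ((2 ^ α * S + k * 2 ^ k * B) / 2 ^ k) := by
    intro y h' hh'
    have hnorm : ‖h' + h'‖ ^ α = 2 ^ α * ‖h'‖ ^ α := by
      rw [← two_smul ℝ h', norm_smul, Real.norm_two, Real.mul_rpow zero_le_two (norm_nonneg _)]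
    have hlarge := hS y (h' + h') (by rw [← two_smul ℝ h']; exact smul_ne_zero two_ne_zero hh')
    have herr := abs_iterDiff_add_self_sub_le (fun z => hB z h' hh') y
    rw [hnorm] at hlarge
    rw [div_mul_eq_mul_div, le_div_iff₀ (by positivity)]
    calc |iterDiff h' k g y| * 2 ^ k = |2 ^ k * iterDiff h' k g y| := by
          rw [abs_mul, abs_of_pos (by positivity : (0 : ℝ) < 2 ^ k), mul_comm]
      _ = |iterDiff (h' + h') k g y - (iterDiff (h' + h') k g y - 2 ^ k * iterDiff h' k g y)| := by
          rw [sub_sub_cancel]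
      _ ≤ |iterDiff (h' + h') k g y| + |iterDiff (h' + h') k g y - 2 ^ k * iterDiff h' k g y| :=
          abs_sub _ _
      _ ≤ (2 ^ α * S + k * 2 ^ k * B) * ‖h'‖ ^ α := by nlinarith
  have hS_le : S ≤ (2 ^ α * S + k * 2 ^ k * B) / 2 ^ k :=
    hdouble.iterDiffSeminorm_le (by have := iterDiffSeminorm_nonneg α k g; positivity)
  have hS_le_const : S ≤ marchaudConst α k * B := by
    rw [le_div_iff₀ (by positivity)] at hS_le
    rw [marchaudConst, div_mul_eq_mul_div, le_div_iff₀ (sub_pos.2 (two_rpow_lt_two_pow hαk))]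
    linarith
  exact (hS x h hh).trans (mul_le_mul_of_nonneg_right hS_le_const hpos.le)

theorem HasIterDiffBound.descend {M D : ℝ} (hα : α < 1) (hg : HasIterDiffBound α 1 g M)
    {k l : ℕ} (hk : 1 ≤ k) (hkl : k ≤ l) (hD : HasIterDiffBound α l g D) :
    HasIterDiffBound α k g ((∏ i ∈ Ico k l, marchaudConst α i) * D) := by
  obtain ⟨n, rfl⟩ := Nat.exists_eq_add_of_le hkl
  induction n generalizing k with
  | zero => simpa using hD
  | succ n ih =>
    have hnext := ih (k := k + 1) (by omega) (by omega) (by rwa [add_right_comm])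
    have hprior : HasIterDiffBound α k g (2 ^ (k - 1) * M) := by
      simpa [Nat.sub_add_cancel hk] using hg.add (k - 1)
    rw [prod_eq_prod_Ico_succ_bot (by omega), mul_assoc]
    rw [add_right_comm] at hnext
    exact hprior.of_succ (hα.trans_le (by exact_mod_cast hk)) hnext

end Marchaud

/-- For `α ∈ (0,1)` and an integer `l ≥ 1`, there is a constant
`C_{l,α} > 1`, depending only on `l` and `α`, such that for every bounded `α`-Hölder
continuous `g : ℝ^m → ℝ` one has
`C_{l,α}⁻¹ ‖g‖_{C^α} ≤ ‖g‖_{α,Δ,l} ≤ C_{l,α} ‖g‖_{C^α}`. -/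
theorem iterated_difference_norm_equiv (l : ℕ) (hl : 1 ≤ l) (α : ℝ) (hα : α ∈ Ioo (0:ℝ) 1) :
    ∃ C > 1, ∀ (m : ℕ) (g : EuclideanSpace ℝ (Fin m) → ℝ),
      (∃ M : ℝ, (∀ x, |g x| ≤ M) ∧ ∀ x y, |g x - g y| ≤ M * ‖x - y‖ ^ α) →
      C⁻¹ * cAlphaNorm α g ≤ deltaNorm α l g ∧ deltaNorm α l g ≤ C * cAlphaNorm α g := by
  set K := ∏ k ∈ Ico 1 l, marchaudConst α k
  have hK : 0 ≤ K := prod_nonneg fun k hk =>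
    marchaudConst_nonneg (hα.2.trans_le (by exact_mod_cast (mem_Ico.1 hk).1))
  have h2l : (1 : ℝ) < 2 ^ l := one_lt_pow₀ one_lt_two (by omega)
  refine ⟨K + 2 ^ l, by linarith, fun m g ⟨M, _, hM⟩ => ?_⟩
  have hg : HasIterDiffBound α 1 g M := fun x h _ => by
    simpa [iterDiff_one] using hM (x + h) x
  set S₁ := iterDiffSeminorm α 1 g
  set Sₗ := iterDiffSeminorm α l g
  have hSₗ : HasIterDiffBound α l g (2 ^ (l - 1) * S₁) := by
    simpa [Nat.sub_add_cancel hl] using hg.iterDiffSeminorm_bound.add (l - 1)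
  have hS₁ := iterDiffSeminorm_nonneg α 1 g
  have hupper : Sₗ ≤ 2 ^ (l - 1) * S₁ := hSₗ.iterDiffSeminorm_le (by positivity)
  have hlower : S₁ ≤ K * Sₗ :=
    (hg.descend hα.2 le_rfl hl hSₗ.iterDiffSeminorm_bound).iterDiffSeminorm_le
      (mul_nonneg hK (iterDiffSeminorm_nonneg α l g))
  have h2pow : (2 : ℝ) ^ (l - 1) ≤ 2 ^ l := pow_le_pow_right₀ one_le_two (Nat.sub_le l 1)
  have hS₀ := supNorm_nonneg g
  have hSₗ₀ := iterDiffSeminorm_nonneg α l g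
  rw [cAlphaNorm_eq, deltaNorm_eq]
  constructor
  · rw [inv_mul_le_iff₀ (by positivity)]
    nlinarith
  · nlinarith

end
end

section
/- Let g(t) := |t| log(|t| + 2) for t ∈ ℝ. For every integer k ≥ 3 there exists a convex function g_k : ℝ → ℝ of class C² such that g_k(t) = g(t) for all |t| ≥ 1/k, g_k''(t) ≥ 1/3 for all t ∈ [−1,1], and |g_k'(t)| ≤ 4 for all t ∈ [−1,1]. In particular g_k converges pointwise to g as k → ∞. -/
/-!
Replace `|t|` by `h_c t = φ (c t) / c`, where `φ` is the piecewise cubic with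
`φ'' = 2 max (1 - |x|) 0` and `φ = |x|` off `(-1, 1)`: then `h_c t = |t|` for `|t| ≥ 1/c`,
`|t| ≤ h_c t ≤ |t| + 1/(3c)`, `|h_c'| ≤ 1`, `h_c'' ≥ 0` and, for `c ≥ 1`, `h_c'^2 + h_c'' ≥ 1`.
Take `g_c = F ∘ h_c` with `F s = s log (s + 2)`. For `c ≥ 1` and `|t| ≤ 1` the value `h_c t`
lies in `[0, 2]`, where `F', F'' ≥ 1/3` and `F' ≤ 4`; hence
`g_c'' = F'' (h_c) h_c'^2 + F' (h_c) h_c'' ≥ (h_c'^2 + h_c'') / 3 ≥ 1/3` and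
`|g_c'| ≤ F' (h_c) ≤ 4`.
-/

open Set Filter Real Topology

theorem hasDerivAt_max_zero_pow (n : ℕ) (x : ℝ) :
    HasDerivAt (fun x : ℝ => max x 0 ^ (n + 2)) ((n + 2) * max x 0 ^ (n + 1)) x := by
  refine hasDerivAt_of_hasDerivAt_of_ne' (x := 0) (g := fun x : ℝ => (n + 2) * max x 0 ^ (n + 1))
    (fun y hy => ?_) (by fun_prop) (by fun_prop) x
  rcases hy.lt_or_gt with hy | hy
  · refine (hasDerivAt_const y 0).congr_of_eventuallyEq ?_ |>.congr_deriv ?_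
    · filter_upwards [Iio_mem_nhds hy] with z (hz : z < 0)
      simp [max_eq_right hz.le]
    · simp [max_eq_right hy.le]
  · refine (hasDerivAt_pow (n + 2) y).congr_of_eventuallyEq ?_ |>.congr_deriv ?_
    · filter_upwards [Ioi_mem_nhds hy] with z (hz : 0 < z)
      simp [max_eq_left hz.le]
    · simp [max_eq_left hy.le]

theorem contDiff_max_zero_pow (n : ℕ) : ContDiff ℝ n (fun x : ℝ => max x 0 ^ (n + 1)) := by
  induction n with
  | zero => simpa using continuous_id.max continuous_const
  | succ n ih =>
    have hderiv : deriv (fun x : ℝ => max x 0 ^ (n + 2)) =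
        fun x : ℝ => (n + 2 : ℝ) * max x 0 ^ (n + 1) :=
      funext fun x => (hasDerivAt_max_zero_pow n x).deriv
    rw [Nat.cast_succ, contDiff_succ_iff_deriv, hderiv]
    exact ⟨fun x => (hasDerivAt_max_zero_pow n x).differentiableAt, by simp,
      contDiff_const.mul ih⟩

-- The second difference of `x₊³ / 3`, corrected by `-x` so that it equals `|x|` off `(-1, 1)`.
noncomputable def smoothAbs (x : ℝ) : ℝ :=
  (max (x + 1) 0 ^ 3 - 2 * max x 0 ^ 3 + max (x - 1) 0 ^ 3) / 3 - x

def smoothAbsDeriv (x : ℝ) : ℝ := max (x + 1) 0 ^ 2 - 2 * max x 0 ^ 2 + max (x - 1) 0 ^ 2 - 1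

def smoothAbsDeriv2 (x : ℝ) : ℝ := 2 * (max (x + 1) 0 - 2 * max x 0 + max (x - 1) 0)

section smoothAbs

variable {x : ℝ}

theorem smoothAbs_of_one_le_abs (h : 1 ≤ |x|) :
    smoothAbs x = |x| ∧ |smoothAbsDeriv x| = 1 ∧ smoothAbsDeriv2 x = 0 := by
  rcases le_abs'.1 h with hx | hx
  · simp only [smoothAbs, smoothAbsDeriv, smoothAbsDeriv2, abs_of_neg (by linarith : x < 0),
      max_eq_right (by linarith : x + 1 ≤ 0), max_eq_right (by linarith : x ≤ 0),
      max_eq_right (by linarith : x - 1 ≤ 0)]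
    norm_num
  · simp only [smoothAbs, smoothAbsDeriv, smoothAbsDeriv2, abs_of_pos (by linarith : 0 < x),
      max_eq_left (by linarith : 0 ≤ x + 1), max_eq_left (by linarith : 0 ≤ x),
      max_eq_left (by linarith : 0 ≤ x - 1)]
    have hderiv : (x + 1) ^ 2 - 2 * x ^ 2 + (x - 1) ^ 2 - 1 = 1 := by ring
    exact ⟨by ring, by rw [hderiv, abs_one], by ring⟩

theorem smoothAbs_of_abs_le_one (h : |x| ≤ 1) :
    smoothAbs x = |x| + (1 - |x|) ^ 3 / 3 ∧ smoothAbsDeriv x = x * (2 - |x|) ∧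
      smoothAbsDeriv2 x = 2 * (1 - |x|) := by
  obtain ⟨h1, h2⟩ := abs_le.1 h
  rcases le_total x 0 with hx | hx
  · simp only [smoothAbs, smoothAbsDeriv, smoothAbsDeriv2, abs_of_nonpos hx,
      max_eq_left (by linarith : 0 ≤ x + 1), max_eq_right hx,
      max_eq_right (by linarith : x - 1 ≤ 0)]
    exact ⟨by ring, by ring, by ring⟩
  · simp only [smoothAbs, smoothAbsDeriv, smoothAbsDeriv2, abs_of_nonneg hx,
      max_eq_left (by linarith : 0 ≤ x + 1), max_eq_left hx,
      max_eq_right (by linarith : x - 1 ≤ 0)]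
    exact ⟨by ring, by ring, by ring⟩

theorem abs_le_smoothAbs (x : ℝ) : |x| ≤ smoothAbs x := by
  rcases le_total |x| 1 with h | h
  · rw [(smoothAbs_of_abs_le_one h).1]
    have : 0 ≤ 1 - |x| := by linarith
    exact le_add_of_nonneg_right (by positivity)
  · exact (smoothAbs_of_one_le_abs h).1.ge

theorem smoothAbs_le (x : ℝ) : smoothAbs x ≤ |x| + 1 / 3 := by
  rcases le_total |x| 1 with h | h
  · rw [(smoothAbs_of_abs_le_one h).1]
    have h0 : 0 ≤ 1 - |x| := by linarith
    have : (1 - |x|) ^ 3 ≤ 1 := pow_le_one₀ h0 (by linarith [abs_nonneg x])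
    linarith
  · rw [(smoothAbs_of_one_le_abs h).1]
    linarith

theorem abs_smoothAbsDeriv_le (x : ℝ) : |smoothAbsDeriv x| ≤ 1 := by
  rcases le_total |x| 1 with h | h
  · rw [(smoothAbs_of_abs_le_one h).2.1, abs_mul, abs_of_nonneg (by linarith : 0 ≤ 2 - |x|)]
    nlinarith [sq_nonneg (1 - |x|)]
  · exact (smoothAbs_of_one_le_abs h).2.1.le

theorem smoothAbsDeriv2_nonneg (x : ℝ) : 0 ≤ smoothAbsDeriv2 x := by
  rcases le_total |x| 1 with h | h
  · rw [(smoothAbs_of_abs_le_one h).2.2]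
    linarith
  · rw [(smoothAbs_of_one_le_abs h).2.2]

theorem one_le_smoothAbsDeriv_sq_add_smoothAbsDeriv2 (x : ℝ) :
    1 ≤ smoothAbsDeriv x ^ 2 + smoothAbsDeriv2 x := by
  rcases le_total |x| 1 with h | h
  · obtain ⟨-, h1, h2⟩ := smoothAbs_of_abs_le_one h
    rw [h1, h2, mul_pow, ← sq_abs x]
    have h0 : 0 ≤ 1 - |x| := by linarith
    nlinarith [mul_nonneg h0 (abs_nonneg x), pow_nonneg h0 4]
  · obtain ⟨-, h1, h2⟩ := smoothAbs_of_one_le_abs h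
    rw [h2, ← sq_abs, h1]
    norm_num

theorem hasDerivAt_smoothAbs (x : ℝ) : HasDerivAt smoothAbs (smoothAbsDeriv x) x := by
  have h1 := (hasDerivAt_max_zero_pow 1 (x + 1)).comp_add_const x 1
  have h0 := hasDerivAt_max_zero_pow 1 x
  have h2 := (hasDerivAt_max_zero_pow 1 (x - 1)).comp_sub_const x 1
  exact ((((h1.sub (h0.const_mul 2)).add h2).div_const 3).sub (hasDerivAt_id' x)).congr_deriv
    (by norm_num [smoothAbsDeriv]; ring)

theorem hasDerivAt_smoothAbsDeriv (x : ℝ) : HasDerivAt smoothAbsDeriv (smoothAbsDeriv2 x) x := by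
  have h1 := (hasDerivAt_max_zero_pow 0 (x + 1)).comp_add_const x 1
  have h0 := hasDerivAt_max_zero_pow 0 x
  have h2 := (hasDerivAt_max_zero_pow 0 (x - 1)).comp_sub_const x 1
  exact (((h1.sub (h0.const_mul 2)).add h2).sub_const 1).congr_deriv
    (by norm_num [smoothAbsDeriv2]; ring)

theorem contDiff_smoothAbs : ContDiff ℝ 2 smoothAbs := by
  have h : ContDiff ℝ 2 fun x : ℝ => max x 0 ^ 3 := contDiff_max_zero_pow 2
  have h1 := h.comp (contDiff_id.add (contDiff_const (c := (1 : ℝ))))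
  have h2 := h.comp (contDiff_id.sub (contDiff_const (c := (1 : ℝ))))
  exact (((h1.sub (contDiff_const.mul h)).add h2).div_const 3).sub contDiff_id

end smoothAbs

noncomputable def scaledSmoothAbs (c t : ℝ) : ℝ := smoothAbs (c * t) / c

section scaled

variable {c t : ℝ}

theorem hasDerivAt_scaledSmoothAbs (hc : c ≠ 0) (t : ℝ) :
    HasDerivAt (scaledSmoothAbs c) (smoothAbsDeriv (c * t)) t := by
  have h := ((hasDerivAt_smoothAbs (c * t)).comp t ((hasDerivAt_id' t).const_mul c)).div_const c
  exact h.congr_deriv (by field_simp)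

theorem hasDerivAt_smoothAbsDeriv_const_mul (c t : ℝ) :
    HasDerivAt (fun t => smoothAbsDeriv (c * t)) (c * smoothAbsDeriv2 (c * t)) t :=
  ((hasDerivAt_smoothAbsDeriv (c * t)).comp t ((hasDerivAt_id' t).const_mul c)).congr_deriv
    (by ring)

theorem contDiff_scaledSmoothAbs (c : ℝ) : ContDiff ℝ 2 (scaledSmoothAbs c) :=
  (contDiff_smoothAbs.comp (contDiff_const.mul contDiff_id)).div_const c

theorem scaledSmoothAbs_eq_abs (hc : 0 < c) (ht : c⁻¹ ≤ |t|) : scaledSmoothAbs c t = |t| := by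
  have h : 1 ≤ |c * t| := by
    rw [abs_mul, abs_of_pos hc]
    exact (inv_le_iff_one_le_mul₀' hc).1 ht
  rw [scaledSmoothAbs, (smoothAbs_of_one_le_abs h).1, abs_mul, abs_of_pos hc]
  field_simp

theorem abs_le_scaledSmoothAbs (hc : 0 < c) (t : ℝ) : |t| ≤ scaledSmoothAbs c t := by
  have h := abs_le_smoothAbs (c * t)
  rw [abs_mul, abs_of_pos hc] at h
  rw [scaledSmoothAbs, le_div_iff₀ hc]
  linarith

theorem scaledSmoothAbs_le (hc : 0 < c) (t : ℝ) : scaledSmoothAbs c t ≤ |t| + (3 * c)⁻¹ := by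
  have h := smoothAbs_le (c * t)
  rw [abs_mul, abs_of_pos hc] at h
  rw [scaledSmoothAbs, div_le_iff₀ hc]
  calc smoothAbs (c * t) ≤ c * |t| + 1 / 3 := h
    _ = (|t| + (3 * c)⁻¹) * c := by field_simp

theorem tendsto_scaledSmoothAbs_atTop (t : ℝ) :
    Tendsto (fun c => scaledSmoothAbs c t) atTop (𝓝 |t|) := by
  have hupper : Tendsto (fun c : ℝ => |t| + (3 * c)⁻¹) atTop (𝓝 |t|) := by
    simpa using tendsto_const_nhds.add
      (tendsto_inv_atTop_zero.comp (tendsto_id.const_mul_atTop (by norm_num : (0 : ℝ) < 3)))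
  refine tendsto_of_tendsto_of_tendsto_of_le_of_le' tendsto_const_nhds hupper ?_ ?_
  · filter_upwards [eventually_gt_atTop 0] with c hc using abs_le_scaledSmoothAbs hc t
  · filter_upwards [eventually_gt_atTop 0] with c hc using scaledSmoothAbs_le hc t

end scaled

noncomputable def mulLogAddTwo (s : ℝ) : ℝ := s * log (s + 2)

noncomputable def mulLogAddTwoDeriv (s : ℝ) : ℝ := log (s + 2) + s / (s + 2)

noncomputable def mulLogAddTwoDeriv2 (s : ℝ) : ℝ := 1 / (s + 2) + 2 / (s + 2) ^ 2

section mulLogAddTwo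

variable {s : ℝ}

theorem hasDerivAt_mulLogAddTwo (hs : s + 2 ≠ 0) :
    HasDerivAt mulLogAddTwo (mulLogAddTwoDeriv s) s := by
  have hlog := ((hasDerivAt_id' s).add_const 2).log hs
  exact ((hasDerivAt_id' s).mul hlog).congr_deriv (by simp [mulLogAddTwoDeriv]; ring)

theorem hasDerivAt_mulLogAddTwoDeriv (hs : s + 2 ≠ 0) :
    HasDerivAt mulLogAddTwoDeriv (mulLogAddTwoDeriv2 s) s := by
  have hlog := ((hasDerivAt_id' s).add_const 2).log hs
  have hdiv := (hasDerivAt_id' s).div ((hasDerivAt_id' s).add_const 2) hs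
  exact (hlog.add hdiv).congr_deriv (by rw [mulLogAddTwoDeriv2]; field_simp; ring)

theorem continuousAt_mulLogAddTwo (hs : s + 2 ≠ 0) : ContinuousAt mulLogAddTwo s :=
  (hasDerivAt_mulLogAddTwo hs).continuousAt

theorem one_third_le_mulLogAddTwoDeriv (hs : 0 ≤ s) : 1 / 3 ≤ mulLogAddTwoDeriv s := by
  have hlog : 1 - (s + 2)⁻¹ ≤ log (s + 2) := one_sub_inv_le_log_of_pos (by linarith)
  have hinv : (s + 2)⁻¹ ≤ 1 / 2 := by rw [inv_le_comm₀ (by linarith) (by norm_num)]; linarith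
  have hdiv : 0 ≤ s / (s + 2) := div_nonneg hs (by linarith)
  rw [mulLogAddTwoDeriv]
  linarith

theorem mulLogAddTwoDeriv_le_four (hs₀ : 0 ≤ s) (hs₂ : s ≤ 2) : mulLogAddTwoDeriv s ≤ 4 := by
  have hlog : log (s + 2) ≤ s + 2 - 1 := log_le_sub_one_of_pos (by linarith)
  have hdiv : s / (s + 2) ≤ 1 := (div_le_one (by linarith)).2 (by linarith)
  rw [mulLogAddTwoDeriv]
  linarith

theorem mulLogAddTwoDeriv2_nonneg (hs : 0 ≤ s) : 0 ≤ mulLogAddTwoDeriv2 s := by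
  rw [mulLogAddTwoDeriv2]
  positivity

theorem one_third_le_mulLogAddTwoDeriv2 (hs₀ : 0 ≤ s) (hs₂ : s ≤ 2) :
    1 / 3 ≤ mulLogAddTwoDeriv2 s := by
  rw [mulLogAddTwoDeriv2, div_add_div _ _ (by positivity) (by positivity),
    div_le_div_iff₀ (by norm_num) (by positivity)]
  nlinarith

end mulLogAddTwo

section comp

variable {f f' f'' g g' g'' : ℝ → ℝ}

theorem deriv_comp_eq_of_hasDerivAt (hf : ∀ t, HasDerivAt f (f' (g t)) (g t))
    (hg : ∀ t, HasDerivAt g (g' t) t) : deriv (f ∘ g) = fun t => f' (g t) * g' t :=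
  funext fun t => ((hf t).comp t (hg t)).deriv

theorem hasDerivAt_deriv_comp (hf : ∀ t, HasDerivAt f (f' (g t)) (g t))
    (hf' : ∀ t, HasDerivAt f' (f'' (g t)) (g t)) (hg : ∀ t, HasDerivAt g (g' t) t)
    (hg' : ∀ t, HasDerivAt g' (g'' t) t) (t : ℝ) :
    HasDerivAt (deriv (f ∘ g)) (f'' (g t) * g' t ^ 2 + f' (g t) * g'' t) t := by
  rw [deriv_comp_eq_of_hasDerivAt hf hg]
  exact (((hf' t).comp t (hg t)).mul (hg' t)).congr_deriv
    (by rw [Function.comp_apply]; ring)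

end comp

section approx

variable {c t : ℝ}

theorem scaledSmoothAbs_nonneg (hc : 0 < c) (t : ℝ) : 0 ≤ scaledSmoothAbs c t :=
  (abs_nonneg t).trans (abs_le_scaledSmoothAbs hc t)

theorem scaledSmoothAbs_le_two (hc : 1 ≤ c) (ht : |t| ≤ 1) : scaledSmoothAbs c t ≤ 2 := by
  have h := scaledSmoothAbs_le (by linarith : 0 < c) t
  have hinv : (3 * c)⁻¹ ≤ 1 := inv_le_one_of_one_le₀ (by linarith)
  linarith

theorem deriv_mulLogAddTwo_comp_scaledSmoothAbs (hc : 0 < c) :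
    deriv (mulLogAddTwo ∘ scaledSmoothAbs c) =
      fun t => mulLogAddTwoDeriv (scaledSmoothAbs c t) * smoothAbsDeriv (c * t) :=
  deriv_comp_eq_of_hasDerivAt
    (fun t => hasDerivAt_mulLogAddTwo (by linarith [scaledSmoothAbs_nonneg hc t]))
    (hasDerivAt_scaledSmoothAbs hc.ne')

theorem hasDerivAt_deriv_mulLogAddTwo_comp_scaledSmoothAbs (hc : 0 < c) (t : ℝ) :
    HasDerivAt (deriv (mulLogAddTwo ∘ scaledSmoothAbs c))
      (mulLogAddTwoDeriv2 (scaledSmoothAbs c t) * smoothAbsDeriv (c * t) ^ 2 +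
        mulLogAddTwoDeriv (scaledSmoothAbs c t) * (c * smoothAbsDeriv2 (c * t))) t :=
  hasDerivAt_deriv_comp
    (fun t => hasDerivAt_mulLogAddTwo (by linarith [scaledSmoothAbs_nonneg hc t]))
    (fun t => hasDerivAt_mulLogAddTwoDeriv (by linarith [scaledSmoothAbs_nonneg hc t]))
    (hasDerivAt_scaledSmoothAbs hc.ne') (hasDerivAt_smoothAbsDeriv_const_mul c) t

theorem iteratedDeriv_two_mulLogAddTwo_comp_scaledSmoothAbs (hc : 0 < c) (t : ℝ) :
    iteratedDeriv 2 (mulLogAddTwo ∘ scaledSmoothAbs c) t =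
      mulLogAddTwoDeriv2 (scaledSmoothAbs c t) * smoothAbsDeriv (c * t) ^ 2 +
        mulLogAddTwoDeriv (scaledSmoothAbs c t) * (c * smoothAbsDeriv2 (c * t)) := by
  rw [iteratedDeriv_succ, iteratedDeriv_one]
  exact (hasDerivAt_deriv_mulLogAddTwo_comp_scaledSmoothAbs hc t).deriv

theorem contDiff_mulLogAddTwo_comp_scaledSmoothAbs (hc : 0 < c) :
    ContDiff ℝ 2 (mulLogAddTwo ∘ scaledSmoothAbs c) := by
  have h := contDiff_scaledSmoothAbs c
  exact h.mul ((h.add contDiff_const).log fun t => by linarith [scaledSmoothAbs_nonneg hc t])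

theorem convexOn_mulLogAddTwo_comp_scaledSmoothAbs (hc : 0 < c) :
    ConvexOn ℝ univ (mulLogAddTwo ∘ scaledSmoothAbs c) := by
  refine convexOn_univ_of_deriv2_nonneg
    ((contDiff_mulLogAddTwo_comp_scaledSmoothAbs hc).differentiable (by norm_num))
    (fun t => (hasDerivAt_deriv_mulLogAddTwo_comp_scaledSmoothAbs hc t).differentiableAt)
    fun t => ?_
  rw [← iteratedDeriv_eq_iterate, iteratedDeriv_two_mulLogAddTwo_comp_scaledSmoothAbs hc]
  have hs := scaledSmoothAbs_nonneg hc t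
  have h1 := mulLogAddTwoDeriv2_nonneg hs
  have h2 := one_third_le_mulLogAddTwoDeriv hs
  have h3 := smoothAbsDeriv2_nonneg (c * t)
  positivity

theorem one_third_le_iteratedDeriv_two_mulLogAddTwo_comp_scaledSmoothAbs (hc : 1 ≤ c)
    (ht : |t| ≤ 1) : 1 / 3 ≤ iteratedDeriv 2 (mulLogAddTwo ∘ scaledSmoothAbs c) t := by
  rw [iteratedDeriv_two_mulLogAddTwo_comp_scaledSmoothAbs (by linarith)]
  have hs₀ := scaledSmoothAbs_nonneg (by linarith : 0 < c) t
  have hs₂ := scaledSmoothAbs_le_two hc ht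
  have h1 := one_third_le_mulLogAddTwoDeriv2 hs₀ hs₂
  have h2 := one_third_le_mulLogAddTwoDeriv hs₀
  have h3 := smoothAbsDeriv2_nonneg (c * t)
  have h4 := one_le_smoothAbsDeriv_sq_add_smoothAbsDeriv2 (c * t)
  have h5 : smoothAbsDeriv2 (c * t) ≤ c * smoothAbsDeriv2 (c * t) := le_mul_of_one_le_left h3 hc
  nlinarith [sq_nonneg (smoothAbsDeriv (c * t))]

theorem abs_deriv_mulLogAddTwo_comp_scaledSmoothAbs_le_four (hc : 1 ≤ c) (ht : |t| ≤ 1) :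
    |deriv (mulLogAddTwo ∘ scaledSmoothAbs c) t| ≤ 4 := by
  rw [deriv_mulLogAddTwo_comp_scaledSmoothAbs (by linarith)]
  have hs₀ := scaledSmoothAbs_nonneg (by linarith : 0 < c) t
  have h1 := mulLogAddTwoDeriv_le_four hs₀ (scaledSmoothAbs_le_two hc ht)
  have h2 := one_third_le_mulLogAddTwoDeriv hs₀
  calc |mulLogAddTwoDeriv (scaledSmoothAbs c t) * smoothAbsDeriv (c * t)|
      = mulLogAddTwoDeriv (scaledSmoothAbs c t) * |smoothAbsDeriv (c * t)| := by
        rw [abs_mul, abs_of_nonneg (by linarith)]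
    _ ≤ 4 * 1 := mul_le_mul h1 (abs_smoothAbsDeriv_le _) (abs_nonneg _) (by norm_num)
    _ = 4 := mul_one 4

end approx

/-- Let `g t = |t| log(|t| + 2)`. For every integer `k ≥ 3` there is a convex
`C²` function `g_k : ℝ → ℝ` with `g_k = g` on `{|t| ≥ 1/k}`, `g_k'' ≥ 1/3` on `[-1,1]` and
`|g_k'| ≤ 4` on `[-1,1]`; in particular the `g_k` converge pointwise to `g`. -/
theorem smooth_convex_approx_of_abs_log :
    ∃ G : ℕ → ℝ → ℝ,
      (∀ k : ℕ, 3 ≤ k →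
        ContDiff ℝ 2 (G k) ∧
        ConvexOn ℝ Set.univ (G k) ∧
        (∀ t : ℝ, 1 / (k : ℝ) ≤ |t| → G k t = |t| * Real.log (|t| + 2)) ∧
        (∀ t ∈ Icc (-1 : ℝ) 1, 1 / 3 ≤ iteratedDeriv 2 (G k) t) ∧
        (∀ t ∈ Icc (-1 : ℝ) 1, |deriv (G k) t| ≤ 4)) ∧
      (∀ t : ℝ, Tendsto (fun k => G k t) atTop (nhds (|t| * Real.log (|t| + 2)))) := by
  refine ⟨fun k => mulLogAddTwo ∘ scaledSmoothAbs k, fun k hk => ?_, fun t => ?_⟩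
  · have hk₁ : (1 : ℝ) ≤ k := by exact_mod_cast (by omega : 1 ≤ k)
    have hk₀ : (0 : ℝ) < k := by linarith
    refine ⟨contDiff_mulLogAddTwo_comp_scaledSmoothAbs hk₀,
      convexOn_mulLogAddTwo_comp_scaledSmoothAbs hk₀, fun t ht => ?_,
      fun t ht => one_third_le_iteratedDeriv_two_mulLogAddTwo_comp_scaledSmoothAbs hk₁
        (abs_le.2 ht),
      fun t ht => abs_deriv_mulLogAddTwo_comp_scaledSmoothAbs_le_four hk₁ (abs_le.2 ht)⟩
    exact congrArg mulLogAddTwo (scaledSmoothAbs_eq_abs hk₀ (by rwa [one_div] at ht))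
  · have hcont : ContinuousAt mulLogAddTwo |t| :=
      continuousAt_mulLogAddTwo (by linarith [abs_nonneg t])
    exact hcont.tendsto.comp
      ((tendsto_scaledSmoothAbs_atTop t).comp tendsto_natCast_atTop_atTop)
end

section
/- Let θ' > 0 and let Φ : cl D → ℂ be continuous on the closed unit disc, holomorphic on D, of class C¹ up to the boundary, and satisfy: |Φ(z)| ≤ 1 for all z ∈ cl D; Φ(1) = 1; |Φ(e^{iθ})| = 1 for all |θ| ≤ θ'; and Φ'(1) ≠ 0 (the derivative of Φ at the boundary point 1, obtained by continuous extension of Φ' from D). Then Φ'(1) is a positive real number. -/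
/-!
Since `Re Φ ≤ ‖Φ‖ ≤ 1 = Re Φ(1)` on the closed disc, `Re Φ` attains its maximum over the closed
disc at `1`. Being `C¹` up to the boundary, `Φ` is real-differentiable at `1` within the closed
disc with derivative `v ↦ v Φ'(1)`, so Fermat's principle gives `Re ((y - 1) Φ'(1)) ≤ 0` for
every `y` in the closed disc. The choice `y = conj Φ'(1) / ‖Φ'(1)‖` turns this into
`‖Φ'(1)‖ ≤ Re Φ'(1)`, which forces `Φ'(1)` to be a positive real once it is nonzero.
-/

open Set Metric Complex ComplexConjugate

theorem hasFDerivWithinAt_closure_of_hasDerivAt_of_continuousWithinAt {s : Set ℂ}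
    (hconv : Convex ℝ s) (hopen : IsOpen s) {f f' : ℂ → ℂ} (hf : ContinuousOn f (closure s))
    (hderiv : ∀ z ∈ s, HasDerivAt f (f' z) z) {x : ℂ} (hf' : ContinuousWithinAt f' s x) :
    HasFDerivWithinAt f (f' x • (1 : ℂ →L[ℝ] ℂ)) (closure s) x := by
  have hfderiv : EqOn (fderiv ℝ f) (fun z => f' z • (1 : ℂ →L[ℝ] ℂ)) s := fun z hz =>
    (hderiv z hz).complexToReal_fderiv.fderiv
  refine hasFDerivWithinAt_closure_of_tendsto_fderiv
    (fun z hz => (hderiv z hz).complexToReal_fderiv.differentiableAt.differentiableWithinAt)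
    hconv hopen (fun z hz => (hf z hz).mono subset_closure) ?_
  exact (hf'.smul continuousWithinAt_const).tendsto.congr'
    (eventuallyEq_nhdsWithin_of_eqOn hfderiv).symm

theorem norm_le_re_of_isMaxOn_re_closedBall {Φ : ℂ → ℂ} {a : ℂ}
    (hmax : IsMaxOn (fun z => (Φ z).re) (closedBall 0 1) 1)
    (hΦ : HasFDerivWithinAt Φ (a • (1 : ℂ →L[ℝ] ℂ)) (closedBall 0 1) 1) : ‖a‖ ≤ a.re := by
  set y := conj a / ‖a‖
  have hy : y ∈ closedBall (0 : ℂ) 1 := by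
    simpa [y, norm_div] using div_self_le_one ‖a‖
  have hcone : y - 1 ∈ posTangentConeAt (closedBall (0 : ℂ) 1) 1 :=
    sub_mem_posTangentConeAt_of_segment_subset
      ((convex_closedBall 0 1).segment_subset (by simp) hy)
  have hnonpos := hmax.localize.hasFDerivWithinAt_nonpos
    (reCLM.hasFDerivAt.comp_hasFDerivWithinAt 1 hΦ) hcone
  have hya : y * a = ‖a‖ := by
    rw [div_mul_eq_mul_div, conj_mul', ← ofReal_pow, ← ofReal_div, sq, mul_self_div_self]
  simp only [ContinuousLinearMap.comp_apply, smul_apply,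
    one_apply_eq_self, reCLM_apply, smul_eq_mul, sub_mul, one_mul, mul_comm a,
    hya, sub_re, ofReal_re] at hnonpos
  linarith

theorem deriv_at_boundary_fixed_point_pos_general (Φ g : ℂ → ℂ)
    (hcont : ContinuousOn Φ (closure (Metric.ball (0 : ℂ) 1)))
    (hholo : DifferentiableOn ℂ Φ (Metric.ball (0 : ℂ) 1))
    (hgcont : ContinuousOn g (closure (Metric.ball (0 : ℂ) 1)))
    (hgext : ∀ z ∈ Metric.ball (0 : ℂ) 1, deriv Φ z = g z)
    (hbound : ∀ z ∈ closure (Metric.ball (0 : ℂ) 1), ‖Φ z‖ ≤ 1)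
    (hfix : Φ 1 = 1)
    (hne : g 1 ≠ 0) :
    (g 1).im = 0 ∧ 0 < (g 1).re := by
  have hclosure : closure (ball (0 : ℂ) 1) = closedBall 0 1 := closure_ball 0 one_ne_zero
  have h1 : (1 : ℂ) ∈ closure (ball (0 : ℂ) 1) := by simp [hclosure]
  have hderiv : HasFDerivWithinAt Φ (g 1 • (1 : ℂ →L[ℝ] ℂ)) (closedBall 0 1) 1 := by
    rw [← hclosure]
    refine hasFDerivWithinAt_closure_of_hasDerivAt_of_continuousWithinAt (convex_ball 0 1)
      isOpen_ball hcont (fun z hz => ?_) ((hgcont 1 h1).mono subset_closure)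
    exact hgext z hz ▸ (hholo.differentiableAt (isOpen_ball.mem_nhds hz)).hasDerivAt
  have hmax : IsMaxOn (fun z => (Φ z).re) (closedBall 0 1) 1 := fun z hz => by
    simpa [hfix] using (re_le_norm _).trans (hbound z (hclosure ▸ hz))
  have hle := norm_le_re_of_isMaxOn_re_closedBall hmax hderiv
  have hpos : 0 < (g 1).re := (norm_pos_iff.2 hne).trans_le hle
  exact ⟨abs_re_eq_norm.1 (le_antisymm (abs_re_le_norm _) (by rwa [abs_of_pos hpos])), hpos⟩

/-- Let `Φ` be continuous on the closed unit disc, holomorphic on the open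
disc, and `C¹` up to the boundary (its derivative extends continuously to the closed disc as a
function `g`). If `|Φ| ≤ 1` on the closed disc, `Φ(1) = 1`, `|Φ(e^{iθ})| = 1` for `|θ| ≤ θ'`
(with `θ' > 0`) and `Φ'(1) ≠ 0`, then `Φ'(1)` is a positive real number. -/
theorem deriv_at_boundary_fixed_point_pos (θ' : ℝ) (hθ' : 0 < θ') (Φ g : ℂ → ℂ)
    (hcont : ContinuousOn Φ (closure (Metric.ball (0 : ℂ) 1)))
    (hholo : DifferentiableOn ℂ Φ (Metric.ball (0 : ℂ) 1))
    (hgcont : ContinuousOn g (closure (Metric.ball (0 : ℂ) 1)))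
    (hgext : ∀ z ∈ Metric.ball (0 : ℂ) 1, deriv Φ z = g z)
    (hbound : ∀ z ∈ closure (Metric.ball (0 : ℂ) 1), ‖Φ z‖ ≤ 1)
    (hfix : Φ 1 = 1)
    (hmod : ∀ θ : ℝ, |θ| ≤ θ' → ‖Φ (Complex.exp (θ * Complex.I))‖ = 1)
    (hne : g 1 ≠ 0) :
    (g 1).im = 0 ∧ 0 < (g 1).re :=
  deriv_at_boundary_fixed_point_pos_general Φ g hcont hholo hgcont hgext hbound hfix hne
end
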